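/- arXiv:2512.15987 — 2 statements merged into one kernel-verified Lean document; each statement's English description precedes it below -/
import Mathlib

section
/- Let f : ℝ^d → ℂ be measurable with |f(x)| ≤ 1 for all x, let ℓ ≥ 1, and define f^(ℓ)(x) = f(x) e^{−‖x‖²/(2ℓ²)}. Then the Fourier transform f̂^(ℓ) is ℓ^{d+1}-Lipschitz on ℝ^d: |f̂^(ℓ)(y₁) − f̂^(ℓ)(y₂)| ≤ ℓ^{d+1} ‖y₁ − y₂‖. -/
open MeasureTheory Complex Real RealInnerProductSpace

/-! The integrand depends on `y` only through the phase, and `|e^{-ia} - e^{-ib}| ≤ |a - b|`, so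
the difference of the two transforms is at most `∫ |⟪y₁ - y₂, x⟫| e^{-‖x‖²/(2ℓ²)} dx`. Rotating
`y₁ - y₂` onto the first coordinate axis, this Gaussian moment factorizes as
`‖y₁ - y₂‖ · 2ℓ² · (√(2π) ℓ)^{d-1}`; after the normalization `(2π)^{-d/2}` the constant is
`(2 / √(2π)) ℓ^{d+1} ≤ ℓ^{d+1}`. -/

theorem norm_cexp_neg_I_mul_sub_le (a b : ℝ) :
    ‖cexp (-(I * a)) - cexp (-(I * b))‖ ≤ |a - b| := by
  have h : cexp (-(I * a)) - cexp (-(I * b)) = cexp (-(I * a)) * -(cexp (I * ↑(a - b)) - 1) := by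
    rw [mul_neg, mul_sub, ← Complex.exp_add]; push_cast; ring_nf
  rw [h, norm_mul, norm_neg, ← mul_neg, ← ofReal_neg, norm_exp_I_mul_ofReal, one_mul]
  exact Real.norm_exp_I_mul_ofReal_sub_one_le

theorem integral_abs_mul_exp_neg_mul_sq {b : ℝ} (hb : 0 < b) :
    ∫ x : ℝ, |x| * rexp (-b * x ^ 2) = b⁻¹ := by
  have h := integral_mul_cexp_neg_mul_sq (b := (b : ℂ)) (by simpa using hb)
  simp only [← ofReal_pow, ← ofReal_neg, ← ofReal_mul, ← Complex.ofReal_exp,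
    integral_complex_ofReal, ← ofReal_ofNat, ← ofReal_inv, ofReal_inj] at h
  have h_abs := integral_comp_abs (f := fun t => t * rexp (-b * t ^ 2))
  simp only [sq_abs] at h_abs
  rw [h_abs, h]
  field_simp

theorem EuclideanSpace.integral_abs_apply_zero_mul_exp_neg_mul_sq_norm (n : ℕ) {b : ℝ}
    (hb : 0 < b) :
    ∫ x : EuclideanSpace ℝ (Fin (n + 1)), |x 0| * rexp (-b * ‖x‖ ^ 2)
      = b⁻¹ * √(π / b) ^ n := by
  let h : Fin (n + 1) → ℝ → ℝ :=
    Fin.cons (fun t => |t| * rexp (-b * t ^ 2)) fun _ t => rexp (-b * t ^ 2)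
  have h_prod (x : EuclideanSpace ℝ (Fin (n + 1))) :
      |x 0| * rexp (-b * ‖x‖ ^ 2) = ∏ i, h i (x i) := by
    simp only [h, EuclideanSpace.norm_sq_eq, Real.norm_eq_abs, sq_abs, Fin.prod_univ_succ,
      Fin.sum_univ_succ, Fin.cons_zero, Fin.cons_succ, mul_add, Real.exp_add, Finset.mul_sum,
      Real.exp_sum]
    ring
  calc ∫ x : EuclideanSpace ℝ (Fin (n + 1)), |x 0| * rexp (-b * ‖x‖ ^ 2)
      = ∫ v : Fin (n + 1) → ℝ, ∏ i, h i (v i) := by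
        simp_rw [h_prod]
        exact (EuclideanSpace.volume_preserving_symm_measurableEquiv_toLp _).integral_comp'
          (fun v : Fin (n + 1) → ℝ => ∏ i, h i (v i))
    _ = ∏ i, ∫ t, h i t := integral_fintype_prod_volume_eq_prod h
    _ = b⁻¹ * √(π / b) ^ n := by
        simp only [h, Fin.prod_univ_succ, Fin.cons_zero, Fin.cons_succ, Finset.prod_const,
          Finset.card_univ, Fintype.card_fin, integral_abs_mul_exp_neg_mul_sq hb,
          integral_gaussian]

section InnerProductSpace

variable {V : Type*} [NormedAddCommGroup V] [InnerProductSpace ℝ V]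

theorem norm_integral_cexp_inner_mul_sub_le [MeasurableSpace V] [OpensMeasurableSpace V]
    {μ : Measure V} {g : V → ℂ} {G : V → ℝ} (y₁ y₂ : V) (hg : Integrable g μ)
    (hG : Integrable (fun x => |⟪y₁ - y₂, x⟫| * G x) μ) (hgG : ∀ x, ‖g x‖ ≤ G x) :
    ‖∫ x, cexp (-(I * ⟪y₁, x⟫)) * g x ∂μ - ∫ x, cexp (-(I * ⟪y₂, x⟫)) * g x ∂μ‖
      ≤ ∫ x, |⟪y₁ - y₂, x⟫| * G x ∂μ := by
  have h_int (y : V) : Integrable (fun x => cexp (-(I * ⟪y, x⟫)) * g x) μ :=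
    hg.bdd_mul (by fun_prop) (.of_forall fun x => by
      rw [← mul_neg, ← ofReal_neg, norm_exp_I_mul_ofReal])
  rw [← integral_sub (h_int y₁) (h_int y₂)]
  refine norm_integral_le_of_norm_le hG (.of_forall fun x => ?_)
  rw [← sub_mul, norm_mul, inner_sub_left]
  exact mul_le_mul (norm_cexp_neg_I_mul_sub_le _ _) (hgG x) (norm_nonneg _) (abs_nonneg _)

variable [FiniteDimensional ℝ V] [MeasurableSpace V] [BorelSpace V]

theorem integrable_exp_neg_mul_sq_norm {b : ℝ} (hb : 0 < b) :
    Integrable fun x : V => rexp (-b * ‖x‖ ^ 2) :=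
  .of_integral_ne_zero (by rw [GaussianFourier.integral_rexp_neg_mul_sq_norm hb]; positivity)

theorem integral_abs_inner_mul_exp_neg_mul_sq_norm {n : ℕ} (hV : Module.finrank ℝ V = n + 1)
    (v : V) {b : ℝ} (hb : 0 < b) :
    ∫ x : V, |⟪v, x⟫| * rexp (-b * ‖x‖ ^ 2) = ‖v‖ * (b⁻¹ * √(π / b) ^ n) := by
  rcases eq_or_ne v 0 with rfl | hv
  · simp
  obtain ⟨B, hB⟩ := Orthonormal.exists_orthonormalBasis_extension_of_card_eq
    (v := fun _ : Fin (n + 1) => ‖v‖⁻¹ • v) (s := {0}) (by simpa using hV)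
    ⟨fun _ => norm_smul_inv_norm hv, fun i j hij => absurd (Subsingleton.elim i j) hij⟩
  have h_inner (x : V) : ⟪v, x⟫ = ‖v‖ * B.repr x 0 := by
    rw [B.repr_apply_apply, hB 0 rfl, real_inner_smul_left, ← mul_assoc,
      mul_inv_cancel₀ (norm_ne_zero_iff.2 hv), one_mul]
  calc ∫ x : V, |⟪v, x⟫| * rexp (-b * ‖x‖ ^ 2)
      = ‖v‖ * ∫ x : V, |B.repr x 0| * rexp (-b * ‖B.repr x‖ ^ 2) := by
        simp_rw [h_inner, abs_mul, abs_norm, B.repr.norm_map, mul_assoc]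
        exact integral_const_mul _ _
    _ = ‖v‖ * (b⁻¹ * √(π / b) ^ n) := by
        congr 1
        exact (B.measurePreserving_measurableEquiv.integral_comp' _).trans
          (EuclideanSpace.integral_abs_apply_zero_mul_exp_neg_mul_sq_norm n hb)

theorem integrable_abs_inner_mul_exp_neg_mul_sq_norm (v : V) {b : ℝ} (hb : 0 < b) :
    Integrable fun x : V => |⟪v, x⟫| * rexp (-b * ‖x‖ ^ 2) := by
  rcases eq_or_ne v 0 with rfl | hv
  · simp
  have : Nontrivial V := ⟨⟨v, 0, hv⟩⟩
  obtain ⟨n, hn⟩ := Nat.exists_eq_succ_of_ne_zero (Module.finrank_pos (R := ℝ) (M := V)).ne'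
  refine .of_integral_ne_zero ?_
  rw [integral_abs_inner_mul_exp_neg_mul_sq_norm hn v hb]
  positivity

end InnerProductSpace

theorem two_le_sqrt_two_mul_pi : 2 ≤ √(2 * π) :=
  (Real.le_sqrt zero_le_two (by positivity)).2 (by nlinarith [Real.pi_gt_three])

theorem inv_sqrt_two_pi_pow_succ_mul_le (n : ℕ) {ℓ : ℝ} (hℓ : 0 ≤ ℓ) :
    (√(2 * π) ^ (n + 1))⁻¹ * (2 * ℓ ^ 2 * (√(2 * π) * ℓ) ^ n) ≤ ℓ ^ (n + 2) := by
  rw [inv_mul_le_iff₀ (by positivity), mul_pow, pow_succ]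
  calc 2 * ℓ ^ 2 * (√(2 * π) ^ n * ℓ ^ n) = 2 * √(2 * π) ^ n * ℓ ^ (n + 2) := by ring
    _ ≤ √(2 * π) * √(2 * π) ^ n * ℓ ^ (n + 2) := by gcongr; exact two_le_sqrt_two_mul_pi
    _ = _ := by ring

/-- the Fourier transform of `f^(ℓ)(x) = f(x) e^{-‖x‖²/(2ℓ²)}`, for `|f| ≤ 1`
and `ℓ ≥ 1`, is `ℓ^{d+1}`-Lipschitz on `ℝ^d` (convention
`f̂^(ℓ)(y) = (2π)^{-d/2} ∫ e^{-i⟪y,x⟫} f^(ℓ)(x) dx`). -/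
theorem fourier_lipschitz_highdim (d : ℕ) (f : EuclideanSpace ℝ (Fin d) → ℂ)
    (hfm : Measurable f) (hf : ∀ x, ‖f x‖ ≤ 1) (ℓ : ℝ) (hℓ : 1 ≤ ℓ)
    (y₁ y₂ : EuclideanSpace ℝ (Fin d)) :
    ‖((((Real.sqrt (2 * Real.pi)) ^ d)⁻¹ : ℂ) *
        ∫ x : EuclideanSpace ℝ (Fin d),
          Complex.exp (-(Complex.I * (⟪y₁, x⟫ : ℝ))) * f x *
            ((Real.exp (-‖x‖ ^ 2 / (2 * ℓ ^ 2)) : ℝ) : ℂ)) -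
      ((((Real.sqrt (2 * Real.pi)) ^ d)⁻¹ : ℂ) *
        ∫ x : EuclideanSpace ℝ (Fin d),
          Complex.exp (-(Complex.I * (⟪y₂, x⟫ : ℝ))) * f x *
            ((Real.exp (-‖x‖ ^ 2 / (2 * ℓ ^ 2)) : ℝ) : ℂ))‖ ≤
      ℓ ^ (d + 1) * ‖y₁ - y₂‖ := by
  rcases eq_or_ne y₁ y₂ with rfl | hne
  · simp
  obtain ⟨n, rfl⟩ : ∃ n, d = n + 1 :=
    Nat.exists_eq_succ_of_ne_zero fun hd => hne (by subst hd; exact Subsingleton.elim _ _)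
  have hℓ₀ : 0 < ℓ := by linarith
  set b := (2 * ℓ ^ 2)⁻¹ with hb_def
  have hb : 0 < b := by positivity
  have h_gauss (x : EuclideanSpace ℝ (Fin (n + 1))) :
      -‖x‖ ^ 2 / (2 * ℓ ^ 2) = -b * ‖x‖ ^ 2 := by ring
  have h_sqrt : √(π / b) = √(2 * π) * ℓ := by
    rw [hb_def, div_inv_eq_mul, ← mul_assoc, mul_comm π, Real.sqrt_mul (by positivity),
      Real.sqrt_sq hℓ₀.le]
  have hg : Integrable fun x => f x * ↑(rexp (-b * ‖x‖ ^ 2)) :=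
    (integrable_exp_neg_mul_sq_norm hb).ofReal.bdd_mul hfm.aestronglyMeasurable (.of_forall hf)
  have hgG (x : EuclideanSpace ℝ (Fin (n + 1))) :
      ‖f x * ↑(rexp (-b * ‖x‖ ^ 2))‖ ≤ rexp (-b * ‖x‖ ^ 2) := by
    rw [norm_mul, norm_real, norm_of_nonneg (exp_pos _).le]
    exact mul_le_of_le_one_left (exp_pos _).le (hf x)
  simp_rw [h_gauss, mul_assoc]
  rw [← mul_sub, norm_mul, norm_inv, norm_pow, norm_real, norm_of_nonneg (sqrt_nonneg _)]
  calc _ ≤ (√(2 * π) ^ (n + 1))⁻¹ * ∫ x, |⟪y₁ - y₂, x⟫| * rexp (-b * ‖x‖ ^ 2) := by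
        gcongr
        exact norm_integral_cexp_inner_mul_sub_le y₁ y₂ hg
          (integrable_abs_inner_mul_exp_neg_mul_sq_norm _ hb) hgG
    _ = (√(2 * π) ^ (n + 1))⁻¹ * (2 * ℓ ^ 2 * (√(2 * π) * ℓ) ^ n) * ‖y₁ - y₂‖ := by
        rw [integral_abs_inner_mul_exp_neg_mul_sq_norm (n := n) (by simp) _ hb, h_sqrt, hb_def,
          inv_inv]
        ring
    _ ≤ ℓ ^ (n + 1 + 1) * ‖y₁ - y₂‖ := by
        gcongr
        exact inv_sqrt_two_pi_pow_succ_mul_le n hℓ₀.le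
end

section
/- Let v₁, …, v_n be unit vectors in ℝ^d (d ≥ 2) such that the sine of the pairwise angle between any two is at least γ > 0. Fix unit vectors b₁ ⊥ b₂. For i ≠ j, the vector w := (v_i·b₁)v_j − (v_j·b₁)v_i satisfies ⟨w, b₁⟩ = 0 and ‖w‖ ≥ max(|v_i·b₁|, |v_j·b₁|) · γ. -/
open Real RealInnerProductSpace

/-- for unit vectors `v_i, v_j` with `sin∠(v_i,v_j) ≥ γ`
(i.e. `1 − ⟪v_i,v_j⟫² ≥ γ²`) and any unit vector `b₁`, the vector
`w = (v_i·b₁)v_j − (v_j·b₁)v_i` satisfies `⟪w, b₁⟫ = 0` and `‖w‖ ≥ max(|v_i·b₁|, |v_j·b₁|)·γ`. -/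
theorem separating_vector_bound (d : ℕ) (hd : 2 ≤ d)
    (vi vj b₁ : EuclideanSpace ℝ (Fin d))
    (hvi : ‖vi‖ = 1) (hvj : ‖vj‖ = 1) (hb₁ : ‖b₁‖ = 1)
    (γ : ℝ) (hγ0 : 0 ≤ γ) (hsep : γ ^ 2 ≤ 1 - (⟪vi, vj⟫ : ℝ) ^ 2) :
    ⟪(⟪vi, b₁⟫ : ℝ) • vj - (⟪vj, b₁⟫ : ℝ) • vi, b₁⟫ = (0 : ℝ) ∧
      max |(⟪vi, b₁⟫ : ℝ)| |(⟪vj, b₁⟫ : ℝ)| * γ ≤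
        ‖(⟪vi, b₁⟫ : ℝ) • vj - (⟪vj, b₁⟫ : ℝ) • vi‖ := by
  set a : ℝ := ⟪vi, b₁⟫ with ha
  set b : ℝ := ⟪vj, b₁⟫ with hb
  set c : ℝ := ⟪vi, vj⟫ with hc
  constructor
  · rw [inner_sub_left, real_inner_smul_left, real_inner_smul_left]
    ring
  · have hsq : ‖a • vj - b • vi‖ ^ 2 = a ^ 2 + b ^ 2 - 2 * a * b * c := by
      rw [norm_sub_sq_real, norm_smul, norm_smul, real_inner_smul_left,
        real_inner_smul_right, real_inner_comm vi vj, ← hc, hvi, hvj]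
      simp [abs_mul_abs_self]
      ring
    have hnn : (0:ℝ) ≤ ‖a • vj - b • vi‖ := norm_nonneg _
    have hmax : (max |a| |b| * γ) ^ 2 ≤ ‖a • vj - b • vi‖ ^ 2 := by
      rcases max_cases |a| |b| with ⟨h1, _⟩ | ⟨h1, _⟩ <;> rw [h1, hsq, mul_pow, sq_abs]
      · nlinarith [sq_nonneg (a * c - b)]
      · nlinarith [sq_nonneg (b * c - a)]
    have hmn : 0 ≤ max |a| |b| * γ := mul_nonneg (le_max_iff.2 (Or.inl (abs_nonneg a))) hγ0
    nlinarith [hmax, hnn, hmn]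
end
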